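/- For all real x, y ≥ 1, f(x·y) − f(x) ≤ f(y), where f(x) = log₂(x)/(log₂(2+log₂ x))². -/

import Mathlib

/-!
Writing `a = log₂ x`, `b = log₂ y`, we have `f x = a φ(a)` with `φ t = 1 / log₂(2 + t)²`
decreasing on `[0, ∞)`. Hence `f (x y) = a φ(a + b) + b φ(a + b) ≤ a φ(a) + b φ(b) = f x + f y`.
-/

noncomputable def f (x : ℝ) : ℝ := Real.logb 2 x / (Real.logb 2 (2 + Real.logb 2 x)) ^ 2

open Real Set

lemma add_mul_le_of_antitoneOn {φ : ℝ → ℝ} (hφ : AntitoneOn φ (Ici 0)) {a b : ℝ}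
    (ha : 0 ≤ a) (hb : 0 ≤ b) : (a + b) * φ (a + b) ≤ a * φ a + b * φ b := by
  have hab : 0 ≤ a + b := add_nonneg ha hb
  rw [add_mul]
  gcongr
  · exact hφ ha hab (le_add_of_nonneg_right hb)
  · exact hφ hb hab (le_add_of_nonneg_left ha)

lemma one_le_logb_two_add {t : ℝ} (ht : 0 ≤ t) : 1 ≤ logb 2 (2 + t) := by
  rw [← logb_self_eq_one one_lt_two]
  exact logb_le_logb_of_le one_lt_two two_pos (by linarith)

lemma antitoneOn_inv_logb_two_add_sq :
    AntitoneOn (fun t : ℝ ↦ (logb 2 (2 + t) ^ 2)⁻¹) (Ici 0) := by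
  intro s hs t _ hst
  have hs_pos : 0 < logb 2 (2 + s) := one_pos.trans_le (one_le_logb_two_add hs)
  have hmono : logb 2 (2 + s) ≤ logb 2 (2 + t) :=
    logb_le_logb_of_le one_lt_two (by linarith [mem_Ici.mp hs]) (by linarith)
  dsimp only
  gcongr

theorem stmt_1 (x y : ℝ) (hx : 1 ≤ x) (hy : 1 ≤ y) :
    f (x * y) - f x ≤ f y := by
  have ha : 0 ≤ logb 2 x := logb_nonneg one_lt_two hx
  have hb : 0 ≤ logb 2 y := logb_nonneg one_lt_two hy
  have hxy : logb 2 (x * y) = logb 2 x + logb 2 y :=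
    logb_mul (by positivity) (by positivity)
  have key := add_mul_le_of_antitoneOn antitoneOn_inv_logb_two_add_sq ha hb
  simp only [f, div_eq_mul_inv, hxy] at key ⊢
  linarith
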